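/- arXiv:1009.5368 — 2 statements merged into one kernel-verified Lean document; each statement's English description precedes it below -/
import Mathlib

section
/- For traveling-wave solutions v(ξ) = 1/ρ(ξ), q(ξ) of the CH(2,-1) system with ξ = x-ct, the quantity 2E = (v')² - (c/v - I)² - (v+J)², with I = c/v - qv² and J = v'' - v + cq, is independent of ξ (provided I and J are themselves constants of the reduced ODE system). -/
/-- For traveling-wave solutions `v(ξ) = 1/ρ(ξ)`, `q(ξ)` of the CH(2,-1) system
(reduced ODEs: `c v'/v² + (q v²)' = 0` and `-c q' - (v - v'')' = 0`), if
`I = c/v - q v²` and `J = v'' - v + c q` are constants, then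
`2E = (v')² - (c/v - I)² - (v + J)²` is independent of `ξ`. -/
theorem CH2m1_travelling_wave_energy
    (c : ℝ) (v q : ℝ → ℝ) (I J : ℝ)
    (hv : ContDiff ℝ (⊤ : ℕ∞) v) (hq : ContDiff ℝ (⊤ : ℕ∞) q)
    (hvpos : ∀ ξ, 0 < v ξ)
    (hode1 : ∀ ξ, c * deriv v ξ / (v ξ) ^ 2
      + deriv (fun η => q η * (v η) ^ 2) ξ = 0)
    (hode2 : ∀ ξ, -c * deriv q ξ
      - deriv (fun η => v η - deriv (deriv v) η) ξ = 0)
    (hI : ∀ ξ, c / v ξ - q ξ * (v ξ) ^ 2 = I)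
    (hJ : ∀ ξ, deriv (deriv v) ξ - v ξ + c * q ξ = J) :
    ∀ ξ : ℝ, deriv (fun η =>
      ((deriv v η) ^ 2 - (c / v η - I) ^ 2 - (v η + J) ^ 2) / 2) ξ = 0 := by
  intro ξ
  have hvd : Differentiable ℝ v := hv.differentiable (by simp)
  have hdv : ContDiff ℝ ((⊤ : ℕ∞) : WithTop ℕ∞) (deriv v) := (contDiff_infty_iff_deriv.mp (hv.of_le (by simp))).2
  have h1 : HasDerivAt v (deriv v ξ) ξ := (hvd ξ).hasDerivAt
  have h2 : HasDerivAt (deriv v) (deriv (deriv v) ξ) ξ :=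
    ((hdv.differentiable (by simp)) ξ).hasDerivAt
  have hvne : v ξ ≠ 0 := (hvpos ξ).ne'
  have h3 : HasDerivAt (fun η => c / v η)
      ((0 * v ξ - c * deriv v ξ) / (v ξ) ^ 2) ξ :=
    (hasDerivAt_const ξ c).div h1 hvne
  have hE := (((h2.pow 2).sub ((h3.sub_const I).pow 2)).sub
      ((h1.add_const J).pow 2)).div_const 2
  rw [(show HasDerivAt (fun η => ((deriv v η) ^ 2 - (c / v η - I) ^ 2 - (v η + J) ^ 2) / 2) _ ξ from hE).deriv]
  have e1 : c / v ξ - I = q ξ * v ξ ^ 2 := by linarith [hI ξ]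
  have e2 : v ξ + J = deriv (deriv v) ξ + c * q ξ := by linarith [hJ ξ]
  rw [e1, e2]
  field_simp
  ring
end

section
/- The compatibility of the two-time CH2 Lax pair Ψ_{xx} = (-ζ²ρ² + ζm + 1/4)Ψ, Ψ_t - (1/(2ζ))Ψ_y = -(U_y+γ)Ψ_x + (1/2)U_{yx}Ψ, for all ζ ≠ 0 and all nonvanishing solutions Ψ, implies the two-time CH2 system m_t + 2U_{yx}m + (U_y+γ)m_x + ρρ_y = 0 and ρ_t + ((U_y+γ)ρ)_x = 0, where m = U_x - U_{xxx}. -/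
/-- Partial derivative in the first (space) variable `x` of `f x t y`. -/
noncomputable def pdX (f : ℝ → ℝ → ℝ → ℝ) : ℝ → ℝ → ℝ → ℝ :=
  fun x t y => deriv (fun x' => f x' t y) x

/-- Partial derivative in the second (time) variable `t` of `f x t y`. -/
noncomputable def pdT (f : ℝ → ℝ → ℝ → ℝ) : ℝ → ℝ → ℝ → ℝ :=
  fun x t y => deriv (fun t' => f x t' y) t

/-- Partial derivative in the third (time) variable `y` of `f x t y`. -/
noncomputable def pdY (f : ℝ → ℝ → ℝ → ℝ) : ℝ → ℝ → ℝ → ℝ :=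
  fun x t y => deriv (fun y' => f x t y') y

/-- The momentum `m = U_x - U_{xxx}`. -/
noncomputable def twoTimeM (U : ℝ → ℝ → ℝ → ℝ) : ℝ → ℝ → ℝ → ℝ :=
  fun x t y => pdX U x t y - pdX (pdX (pdX U)) x t y

/-! ### Auxiliary machinery: directional derivatives on `ℝ × ℝ × ℝ` -/

noncomputable def pD (v : ℝ × ℝ × ℝ) (F : ℝ × ℝ × ℝ → ℝ) : ℝ × ℝ × ℝ → ℝ :=
  fun p => fderiv ℝ F p v

def uncur (f : ℝ → ℝ → ℝ → ℝ) : ℝ × ℝ × ℝ → ℝ := fun p => f p.1 p.2.1 p.2.2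

def e1 : ℝ × ℝ × ℝ := (1, 0, 0)
def e2 : ℝ × ℝ × ℝ := (0, 1, 0)
def e3 : ℝ × ℝ × ℝ := (0, 0, 1)

lemma pD_contDiff {F : ℝ × ℝ × ℝ → ℝ} (hF : ContDiff ℝ (⊤ : ℕ∞) F) (v : ℝ × ℝ × ℝ) :
    ContDiff ℝ (⊤ : ℕ∞) (pD v F) :=
  (hF.fderiv_right (by simp)).clm_apply contDiff_const

lemma pD_pD {F : ℝ × ℝ × ℝ → ℝ} (hF : ContDiff ℝ (⊤ : ℕ∞) F) (v w p : ℝ × ℝ × ℝ) :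
    pD v (pD w F) p = fderiv ℝ (fderiv ℝ F) p v w := by
  have hdF : DifferentiableAt ℝ (fderiv ℝ F) p :=
    ((hF.fderiv_right (m := (⊤ : ℕ∞)) (by simp)).differentiable (by simp)).differentiableAt
  have h := ((ContinuousLinearMap.apply ℝ ℝ w).hasFDerivAt.comp p hdF.hasFDerivAt).fderiv
  show (fderiv ℝ (pD w F) p) v = _
  rw [show pD w F = ⇑(ContinuousLinearMap.apply ℝ ℝ w) ∘ (fderiv ℝ F) from rfl, h]
  rfl

lemma pD_comm {F : ℝ × ℝ × ℝ → ℝ} (hF : ContDiff ℝ (⊤ : ℕ∞) F) (v w : ℝ × ℝ × ℝ) :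
    pD v (pD w F) = pD w (pD v F) := by
  funext p
  rw [pD_pD hF v w p, pD_pD hF w v p]
  exact (hF.contDiffAt.isSymmSndFDerivAt (by rw [minSmoothness_of_isRCLikeNormedField]; exact WithTop.coe_le_coe.mpr le_top)) v w

section pDlemmas
variable {F G : ℝ × ℝ × ℝ → ℝ} {v p : ℝ × ℝ × ℝ}

lemma pD_add (hF : DifferentiableAt ℝ F p) (hG : DifferentiableAt ℝ G p) :
    pD v (fun q => F q + G q) p = pD v F p + pD v G p := by
  simp only [pD]; rw [fderiv_fun_add hF hG]; rfl

lemma pD_sub (hF : DifferentiableAt ℝ F p) (hG : DifferentiableAt ℝ G p) :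
    pD v (fun q => F q - G q) p = pD v F p - pD v G p := by
  simp only [pD]; rw [fderiv_fun_sub hF hG]; rfl

lemma pD_mul (hF : DifferentiableAt ℝ F p) (hG : DifferentiableAt ℝ G p) :
    pD v (fun q => F q * G q) p = pD v F p * G p + F p * pD v G p := by
  simp only [pD]; rw [fderiv_fun_mul hF hG]
  simp only [ContinuousLinearMap.add_apply, ContinuousLinearMap.smul_apply, smul_eq_mul]
  ring

lemma pD_neg : pD v (fun q => -F q) p = -pD v F p := by
  simp only [pD]; rw [fderiv_fun_neg]; rfl

lemma pD_const_mul (hF : DifferentiableAt ℝ F p) (c : ℝ) :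
    pD v (fun q => c * F q) p = c * pD v F p := by
  simp only [pD]; rw [fderiv_const_mul hF]; rfl

lemma pD_add_const (c : ℝ) : pD v (fun q => F q + c) p = pD v F p := by
  simp only [pD]; rw [fderiv_add_const]

end pDlemmas

/-! ### Bridges between curried partial derivatives and `pD` -/

lemma pdX_eq {f : ℝ → ℝ → ℝ → ℝ} (hf : ContDiff ℝ (⊤ : ℕ∞) (uncur f)) (x t y : ℝ) :
    pdX f x t y = pD e1 (uncur f) (x, t, y) := by
  have h1 : HasDerivAt (fun x' : ℝ => ((x', t, y) : ℝ × ℝ × ℝ)) e1 x :=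
    (hasDerivAt_id x).prodMk ((hasDerivAt_const x t).prodMk (hasDerivAt_const x y))
  exact ((hf.differentiable (by simp) (x, t, y)).hasFDerivAt.comp_hasDerivAt x h1).deriv

lemma pdT_eq {f : ℝ → ℝ → ℝ → ℝ} (hf : ContDiff ℝ (⊤ : ℕ∞) (uncur f)) (x t y : ℝ) :
    pdT f x t y = pD e2 (uncur f) (x, t, y) := by
  have h1 : HasDerivAt (fun t' : ℝ => ((x, t', y) : ℝ × ℝ × ℝ)) e2 t :=
    (hasDerivAt_const t x).prodMk ((hasDerivAt_id t).prodMk (hasDerivAt_const t y))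
  exact ((hf.differentiable (by simp) (x, t, y)).hasFDerivAt.comp_hasDerivAt t h1).deriv

lemma pdY_eq {f : ℝ → ℝ → ℝ → ℝ} (hf : ContDiff ℝ (⊤ : ℕ∞) (uncur f)) (x t y : ℝ) :
    pdY f x t y = pD e3 (uncur f) (x, t, y) := by
  have h1 : HasDerivAt (fun y' : ℝ => ((x, t, y') : ℝ × ℝ × ℝ)) e3 y :=
    (hasDerivAt_const y x).prodMk ((hasDerivAt_const y t).prodMk (hasDerivAt_id y))
  exact ((hf.differentiable (by simp) (x, t, y)).hasFDerivAt.comp_hasDerivAt y h1).deriv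

lemma uncur_pdX {f : ℝ → ℝ → ℝ → ℝ} (hf : ContDiff ℝ (⊤ : ℕ∞) (uncur f)) :
    uncur (pdX f) = pD e1 (uncur f) :=
  funext fun p => pdX_eq hf p.1 p.2.1 p.2.2

lemma uncur_pdY {f : ℝ → ℝ → ℝ → ℝ} (hf : ContDiff ℝ (⊤ : ℕ∞) (uncur f)) :
    uncur (pdY f) = pD e3 (uncur f) :=
  funext fun p => pdY_eq hf p.1 p.2.1 p.2.2

lemma pdXX_eq {f : ℝ → ℝ → ℝ → ℝ} (hf : ContDiff ℝ (⊤ : ℕ∞) (uncur f)) (x t y : ℝ) :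
    pdX (pdX f) x t y = pD e1 (pD e1 (uncur f)) (x, t, y) := by
  have c1 : ContDiff ℝ (⊤ : ℕ∞) (uncur (pdX f)) := by rw [uncur_pdX hf]; exact pD_contDiff hf e1
  rw [pdX_eq c1, uncur_pdX hf]

lemma pdXY_eq {f : ℝ → ℝ → ℝ → ℝ} (hf : ContDiff ℝ (⊤ : ℕ∞) (uncur f)) (x t y : ℝ) :
    pdX (pdY f) x t y = pD e1 (pD e3 (uncur f)) (x, t, y) := by
  have c1 : ContDiff ℝ (⊤ : ℕ∞) (uncur (pdY f)) := by rw [uncur_pdY hf]; exact pD_contDiff hf e3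
  rw [pdX_eq c1, uncur_pdY hf]

/-! ### The coefficient functions -/

noncomputable def Wf (U : ℝ → ℝ → ℝ → ℝ) : ℝ × ℝ × ℝ → ℝ := pD e1 (pD e3 (uncur U))

noncomputable def Vf (U : ℝ → ℝ → ℝ → ℝ) (γ : ℝ) : ℝ × ℝ × ℝ → ℝ :=
  fun p => pD e3 (uncur U) p + γ

noncomputable def Mf (U : ℝ → ℝ → ℝ → ℝ) : ℝ × ℝ × ℝ → ℝ :=
  fun p => pD e1 (uncur U) p - pD e1 (pD e1 (pD e1 (uncur U))) p

lemma Wf_contDiff {U : ℝ → ℝ → ℝ → ℝ} (hU : ContDiff ℝ (⊤ : ℕ∞) (uncur U)) :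
    ContDiff ℝ (⊤ : ℕ∞) (Wf U) := pD_contDiff (pD_contDiff hU e3) e1

lemma Vf_contDiff {U : ℝ → ℝ → ℝ → ℝ} (hU : ContDiff ℝ (⊤ : ℕ∞) (uncur U)) (γ : ℝ) :
    ContDiff ℝ (⊤ : ℕ∞) (Vf U γ) := (pD_contDiff hU e3).add contDiff_const

lemma Mf_contDiff {U : ℝ → ℝ → ℝ → ℝ} (hU : ContDiff ℝ (⊤ : ℕ∞) (uncur U)) :
    ContDiff ℝ (⊤ : ℕ∞) (Mf U) :=
  (pD_contDiff hU e1).sub (pD_contDiff (pD_contDiff (pD_contDiff hU e1) e1) e1)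

lemma uncur_twoTimeM {U : ℝ → ℝ → ℝ → ℝ} (hU : ContDiff ℝ (⊤ : ℕ∞) (uncur U)) :
    uncur (twoTimeM U) = Mf U := by
  have h1 : uncur (pdX U) = pD e1 (uncur U) := uncur_pdX hU
  have c1 : ContDiff ℝ (⊤ : ℕ∞) (uncur (pdX U)) := by rw [h1]; exact pD_contDiff hU e1
  have h2 : uncur (pdX (pdX U)) = pD e1 (uncur (pdX U)) := uncur_pdX c1
  have c2 : ContDiff ℝ (⊤ : ℕ∞) (uncur (pdX (pdX U))) := by
    rw [h2, h1]; exact pD_contDiff (pD_contDiff hU e1) e1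
  have h3 : uncur (pdX (pdX (pdX U))) = pD e1 (uncur (pdX (pdX U))) := uncur_pdX c2
  funext p
  show uncur (pdX U) p - uncur (pdX (pdX (pdX U))) p = _
  rw [h1, h3, h2, h1]
  rfl

lemma pD_Vf (U : ℝ → ℝ → ℝ → ℝ) (γ : ℝ) (p : ℝ × ℝ × ℝ) :
    pD e1 (Vf U γ) p = Wf U p := pD_add_const γ


lemma key_identity (U ρ Ψ : ℝ → ℝ → ℝ → ℝ) (γ ζ : ℝ) (hζ : ζ ≠ 0)
    (hU : ContDiff ℝ (⊤ : ℕ∞) (uncur U)) (hρ : ContDiff ℝ (⊤ : ℕ∞) (uncur ρ))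
    (hΨ : ContDiff ℝ (⊤ : ℕ∞) (uncur Ψ))
    (hne : ∀ p, uncur Ψ p ≠ 0)
    (heq1 : ∀ p, pD e1 (pD e1 (uncur Ψ)) p
      = (-ζ^2 * (uncur ρ p * uncur ρ p) + ζ * Mf U p + 1/4) * uncur Ψ p)
    (heq2 : ∀ p, pD e2 (uncur Ψ) p - (1/(2*ζ)) * pD e3 (uncur Ψ) p
      = -(Vf U γ p) * pD e1 (uncur Ψ) p + (1/2) * Wf U p * uncur Ψ p) :
    ∀ p,
      (-ζ^2 * (2*(uncur ρ p * pD e2 (uncur ρ) p)) + ζ * pD e2 (Mf U) p)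
      - (1/(2*ζ)) * (-ζ^2 * (2*(uncur ρ p * pD e3 (uncur ρ) p)) + ζ * pD e3 (Mf U) p)
      + 2 * Wf U p * (-ζ^2 * (uncur ρ p * uncur ρ p) + ζ * Mf U p + 1/4)
      + Vf U γ p * (-ζ^2 * (2*(uncur ρ p * pD e1 (uncur ρ) p)) + ζ * pD e1 (Mf U) p)
      - (1/2) * pD e1 (pD e1 (Wf U)) p = 0 := by
  intro p
  have d : ∀ {G : ℝ × ℝ × ℝ → ℝ}, ContDiff ℝ (⊤ : ℕ∞) G → ∀ q, DifferentiableAt ℝ G q :=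
    fun h q => h.differentiable (by simp) q
  have hM : ContDiff ℝ (⊤ : ℕ∞) (Mf U) := Mf_contDiff hU
  have hW : ContDiff ℝ (⊤ : ℕ∞) (Wf U) := Wf_contDiff hU
  have hV : ContDiff ℝ (⊤ : ℕ∞) (Vf U γ) := Vf_contDiff hU γ
  have hQc : ContDiff ℝ (⊤ : ℕ∞) (fun q => -ζ^2 * (uncur ρ q * uncur ρ q) + ζ * Mf U q + 1/4) :=
    ((contDiff_const.mul (hρ.mul hρ)).add (contDiff_const.mul hM)).add contDiff_const
  have hAc : ContDiff ℝ (⊤ : ℕ∞) (fun q => -(Vf U γ q)) := hV.neg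
  have hBc : ContDiff ℝ (⊤ : ℕ∞) (fun q => (1/2) * Wf U q) := contDiff_const.mul hW
  have hF1 : ContDiff ℝ (⊤ : ℕ∞) (pD e1 (uncur Ψ)) := pD_contDiff hΨ e1
  have hF2 : ContDiff ℝ (⊤ : ℕ∞) (pD e2 (uncur Ψ)) := pD_contDiff hΨ e2
  have hF3 : ContDiff ℝ (⊤ : ℕ∞) (pD e3 (uncur Ψ)) := pD_contDiff hΨ e3
  have hF11 : ContDiff ℝ (⊤ : ℕ∞) (pD e1 (pD e1 (uncur Ψ))) := pD_contDiff hF1 e1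
  have hW1 : ContDiff ℝ (⊤ : ℕ∞) (pD e1 (Wf U)) := pD_contDiff hW e1
  -- first Lax equation as a function identity
  have hFxx : pD e1 (pD e1 (uncur Ψ))
      = fun q => (-ζ^2 * (uncur ρ q * uncur ρ q) + ζ * Mf U q + 1/4) * uncur Ψ q :=
    funext heq1
  -- third x-derivative
  have hFxxx : ∀ q, pD e1 (pD e1 (pD e1 (uncur Ψ))) q
      = pD e1 (fun q' => -ζ^2 * (uncur ρ q' * uncur ρ q' ) + ζ * Mf U q' + 1/4) q * uncur Ψ q
        + (-ζ^2 * (uncur ρ q * uncur ρ q) + ζ * Mf U q + 1/4) * pD e1 (uncur Ψ) q := by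
    intro q
    rw [hFxx]
    exact pD_mul (d hQc q) (d hΨ q)
  -- derivative values of the coefficients A and B
  have hA1 : ∀ q, pD e1 (fun q' => -(Vf U γ q')) q = -(Wf U q) := by
    intro q
    rw [pD_neg, pD_Vf]
  have hA1' : pD e1 (fun q' => -(Vf U γ q')) = fun q => -(Wf U q) := funext hA1
  have hA2 : ∀ q, pD e1 (fun q' => -(Wf U q')) q = -(pD e1 (Wf U) q) := by
    intro q; rw [pD_neg]
  have hB1 : ∀ q, pD e1 (fun q' => (1/2) * Wf U q') q = (1/2) * pD e1 (Wf U) q :=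
    fun q => pD_const_mul (d hW q) _
  have hB1' : pD e1 (fun q' => (1/2) * Wf U q') = fun q => (1/2) * pD e1 (Wf U) q :=
    funext hB1
  -- x-derivative of the left side of the second Lax equation
  have hGx : pD e1 (fun q => pD e2 (uncur Ψ) q - (1/(2*ζ)) * pD e3 (uncur Ψ) q)
      = fun q => pD e2 (pD e1 (uncur Ψ)) q - (1/(2*ζ)) * pD e3 (pD e1 (uncur Ψ)) q := by
    funext q
    rw [pD_sub (d hF2 q) ((d hF3 q).const_mul _), pD_const_mul (d hF3 q),
      pD_comm hΨ e1 e2, pD_comm hΨ e1 e3]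
  have hGxx : ∀ q,
      pD e1 (pD e1 (fun q' => pD e2 (uncur Ψ) q' - (1/(2*ζ)) * pD e3 (uncur Ψ) q')) q
      = (pD e2 (fun q' => -ζ^2 * (uncur ρ q' * uncur ρ q') + ζ * Mf U q' + 1/4) q * uncur Ψ q
          + (-ζ^2 * (uncur ρ q * uncur ρ q) + ζ * Mf U q + 1/4) * pD e2 (uncur Ψ) q)
        - (1/(2*ζ)) *
          (pD e3 (fun q' => -ζ^2 * (uncur ρ q' * uncur ρ q') + ζ * Mf U q' + 1/4) q * uncur Ψ q
          + (-ζ^2 * (uncur ρ q * uncur ρ q) + ζ * Mf U q + 1/4) * pD e3 (uncur Ψ) q) := by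
    intro q
    rw [hGx, pD_sub (d (pD_contDiff hF1 e2) q) ((d (pD_contDiff hF1 e3) q).const_mul _),
      pD_const_mul (d (pD_contDiff hF1 e3) q),
      pD_comm hF1 e1 e2, pD_comm hF1 e1 e3, hFxx,
      pD_mul (d hQc q) (d hΨ q), pD_mul (d hQc q) (d hΨ q)]
  -- x-derivatives of the right side of the second Lax equation
  have hH1 : pD e1 (fun q => -(Vf U γ q) * pD e1 (uncur Ψ) q + (1/2) * Wf U q * uncur Ψ q)
      = fun q => (-(Wf U q) * pD e1 (uncur Ψ) q + -(Vf U γ q) * pD e1 (pD e1 (uncur Ψ)) q)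
        + ((1/2) * pD e1 (Wf U) q * uncur Ψ q + (1/2) * Wf U q * pD e1 (uncur Ψ) q) := by
    funext q
    rw [pD_add ((d hAc q).fun_mul (d hF1 q)) ((d hBc q).fun_mul (d hΨ q)),
      pD_mul (d hAc q) (d hF1 q), pD_mul (d hBc q) (d hΨ q), hA1 q, hB1 q]
  have hH2 : ∀ q,
      pD e1 (fun q' => (-(Wf U q') * pD e1 (uncur Ψ) q'
            + -(Vf U γ q') * pD e1 (pD e1 (uncur Ψ)) q')
          + ((1/2) * pD e1 (Wf U) q' * uncur Ψ q'
            + (1/2) * Wf U q' * pD e1 (uncur Ψ) q')) q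
      = ((-(pD e1 (Wf U) q) * pD e1 (uncur Ψ) q + -(Wf U q) * pD e1 (pD e1 (uncur Ψ)) q)
          + (-(Wf U q) * pD e1 (pD e1 (uncur Ψ)) q
            + -(Vf U γ q) * pD e1 (pD e1 (pD e1 (uncur Ψ))) q))
        + (((1/2) * pD e1 (pD e1 (Wf U)) q * uncur Ψ q
            + (1/2) * pD e1 (Wf U) q * pD e1 (uncur Ψ) q)
          + ((1/2) * pD e1 (Wf U) q * pD e1 (uncur Ψ) q
            + (1/2) * Wf U q * pD e1 (pD e1 (uncur Ψ)) q)) := by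
    intro q
    rw [pD_add (((d hW q).fun_neg.fun_mul (d hF1 q)).fun_add ((d hAc q).fun_mul (d hF11 q)))
        ((((d hW1 q).const_mul _).fun_mul (d hΨ q)).fun_add ((d hBc q).fun_mul (d hF1 q))),
      pD_add ((d hW q).fun_neg.fun_mul (d hF1 q)) ((d hAc q).fun_mul (d hF11 q)),
      pD_add (((d hW1 q).const_mul _).fun_mul (d hΨ q)) ((d hBc q).fun_mul (d hF1 q)),
      pD_mul (d hW q).fun_neg (d hF1 q), pD_mul (d hAc q) (d hF11 q),
      pD_mul ((d hW1 q).const_mul _) (d hΨ q), pD_mul (d hBc q) (d hF1 q),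
      hA2 q, hA1 q, hB1 q, pD_const_mul (d hW1 q)]
  -- the compatibility identity
  have e₀ := congrArg (fun G => pD e1 (pD e1 G) p)
    (funext heq2 :
      (fun q => pD e2 (uncur Ψ) q - (1/(2*ζ)) * pD e3 (uncur Ψ) q)
      = fun q => -(Vf U γ q) * pD e1 (uncur Ψ) q + (1/2) * Wf U q * uncur Ψ q)
  rw [hGxx p, hH1, hH2 p, hFxxx p] at e₀
  rw [heq1 p] at e₀
  -- divide out Ψ
  have hFS : uncur Ψ p *
      (pD e2 (fun q' => -ζ^2 * (uncur ρ q' * uncur ρ q') + ζ * Mf U q' + 1/4) p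
        - (1/(2*ζ)) * pD e3 (fun q' => -ζ^2 * (uncur ρ q' * uncur ρ q') + ζ * Mf U q' + 1/4) p
        + 2 * Wf U p * (-ζ^2 * (uncur ρ p * uncur ρ p) + ζ * Mf U p + 1/4)
        + Vf U γ p * pD e1 (fun q' => -ζ^2 * (uncur ρ q' * uncur ρ q') + ζ * Mf U q' + 1/4) p
        - (1/2) * pD e1 (pD e1 (Wf U)) p) = 0 := by
    linear_combination e₀ - (-ζ^2 * (uncur ρ p * uncur ρ p) + ζ * Mf U p + 1/4) * heq2 p
  have hS := (mul_eq_zero.mp hFS).resolve_left (hne p)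
  -- expand the derivatives of Q
  have hQd : ∀ v q, pD v (fun q' => -ζ^2 * (uncur ρ q' * uncur ρ q') + ζ * Mf U q' + 1/4) q
      = -ζ^2 * (pD v (uncur ρ) q * uncur ρ q + uncur ρ q * pD v (uncur ρ) q)
        + ζ * pD v (Mf U) q := by
    intro v q
    rw [pD_add_const, pD_add ((d (hρ.mul hρ) q).const_mul (-ζ^2)) ((d hM q).const_mul ζ),
      pD_const_mul (d (hρ.mul hρ) q), pD_const_mul (d hM q), pD_mul (d hρ q) (d hρ q)]
  rw [hQd e2 p, hQd e3 p, hQd e1 p] at hS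
  linear_combination hS

/-- Compatibility of the two-time CH2 Lax pair
`Ψ_xx = (-ζ²ρ² + ζ m + 1/4) Ψ`,
`Ψ_t - (1/(2ζ)) Ψ_y = -(U_y + γ) Ψ_x + (1/2) U_{yx} Ψ`,
for every `ζ ≠ 0` (expressed as the existence of a smooth nonvanishing joint
solution `Ψ` for every `ζ ≠ 0`) implies the two-time CH2 system
`m_t + 2 U_{yx} m + (U_y + γ) m_x + ρ ρ_y = 0` and
`ρ_t + ((U_y + γ) ρ)_x = 0`, where `m = U_x - U_{xxx}`. -/
theorem twoTime_CH2_from_lax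
    (U ρ : ℝ → ℝ → ℝ → ℝ) (γ : ℝ)
    (hU : ContDiff ℝ (⊤ : ℕ∞) (fun p : ℝ × ℝ × ℝ => U p.1 p.2.1 p.2.2))
    (hρ : ContDiff ℝ (⊤ : ℕ∞) (fun p : ℝ × ℝ × ℝ => ρ p.1 p.2.1 p.2.2))
    (hcompat : ∀ ζ : ℝ, ζ ≠ 0 →
      ∃ Ψ : ℝ → ℝ → ℝ → ℝ,
        ContDiff ℝ (⊤ : ℕ∞) (fun p : ℝ × ℝ × ℝ => Ψ p.1 p.2.1 p.2.2) ∧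
        (∀ x t y, Ψ x t y ≠ 0) ∧
        (∀ x t y, pdX (pdX Ψ) x t y
          = (-ζ ^ 2 * (ρ x t y) ^ 2 + ζ * twoTimeM U x t y + 1/4) * Ψ x t y) ∧
        (∀ x t y, pdT Ψ x t y - (1 / (2 * ζ)) * pdY Ψ x t y
          = -(pdY U x t y + γ) * pdX Ψ x t y
            + (1/2) * pdX (pdY U) x t y * Ψ x t y)) :
    (∀ x t y, pdT (twoTimeM U) x t y
        + 2 * pdX (pdY U) x t y * twoTimeM U x t y
        + (pdY U x t y + γ) * pdX (twoTimeM U) x t y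
        + ρ x t y * pdY ρ x t y = 0) ∧
    (∀ x t y, pdT ρ x t y
        + pdX (fun x' t' y' => (pdY U x' t' y' + γ) * ρ x' t' y') x t y = 0) := by
  have hU' : ContDiff ℝ (⊤ : ℕ∞) (uncur U) := hU
  have hρ' : ContDiff ℝ (⊤ : ℕ∞) (uncur ρ) := hρ
  have cM : ContDiff ℝ (⊤ : ℕ∞) (uncur (twoTimeM U)) := by
    rw [uncur_twoTimeM hU']; exact Mf_contDiff hU'
  -- the key polynomial identity, for every nonzero spectral parameter
  have key : ∀ ζ : ℝ, ζ ≠ 0 → ∀ p : ℝ × ℝ × ℝ,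
      (-ζ^2 * (2*(uncur ρ p * pD e2 (uncur ρ) p)) + ζ * pD e2 (Mf U) p)
      - (1/(2*ζ)) * (-ζ^2 * (2*(uncur ρ p * pD e3 (uncur ρ) p)) + ζ * pD e3 (Mf U) p)
      + 2 * Wf U p * (-ζ^2 * (uncur ρ p * uncur ρ p) + ζ * Mf U p + 1/4)
      + Vf U γ p * (-ζ^2 * (2*(uncur ρ p * pD e1 (uncur ρ) p)) + ζ * pD e1 (Mf U) p)
      - (1/2) * pD e1 (pD e1 (Wf U)) p = 0 := by
    intro ζ hζ
    obtain ⟨Ψ, hΨ, hne, h1, h2⟩ := hcompat ζ hζ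
    have hΨ' : ContDiff ℝ (⊤ : ℕ∞) (uncur Ψ) := hΨ
    have hne' : ∀ p : ℝ × ℝ × ℝ, uncur Ψ p ≠ 0 := fun p => hne p.1 p.2.1 p.2.2
    have heq1 : ∀ p, pD e1 (pD e1 (uncur Ψ)) p
        = (-ζ^2 * (uncur ρ p * uncur ρ p) + ζ * Mf U p + 1/4) * uncur Ψ p := by
      rintro ⟨x, t, y⟩
      have h := h1 x t y
      rw [pdXX_eq hΨ', pow_two (ρ x t y),
        show twoTimeM U x t y = Mf U (x, t, y) from congrFun (uncur_twoTimeM hU') (x, t, y)]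
        at h
      exact h
    have heq2 : ∀ p, pD e2 (uncur Ψ) p - (1/(2*ζ)) * pD e3 (uncur Ψ) p
        = -(Vf U γ p) * pD e1 (uncur Ψ) p + (1/2) * Wf U p * uncur Ψ p := by
      rintro ⟨x, t, y⟩
      have h := h2 x t y
      rw [pdT_eq hΨ', pdY_eq hΨ', pdX_eq hΨ', pdY_eq hU', pdXY_eq hU'] at h
      exact h
    exact key_identity U ρ Ψ γ ζ hζ hU' hρ' hΨ' hne' heq1 heq2
  constructor
  · intro x t y
    have k1 := key 1 one_ne_zero (x, t, y)
    have km := key (-1) (by norm_num) (x, t, y)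
    rw [pdT_eq cM, pdX_eq cM, pdXY_eq hU', pdY_eq hU', pdY_eq hρ', uncur_twoTimeM hU',
      show twoTimeM U x t y = Mf U (x, t, y) from congrFun (uncur_twoTimeM hU') (x, t, y),
      show ρ x t y = uncur ρ (x, t, y) from rfl,
      show pD e1 (pD e3 (uncur U)) (x, t, y) = Wf U (x, t, y) from rfl,
      show pD e3 (uncur U) (x, t, y) + γ = Vf U γ (x, t, y) from rfl]
    linear_combination (1/2) * k1 - (1/2) * km
  · -- the multiplied second equation
    have hmul : ∀ p : ℝ × ℝ × ℝ, uncur ρ p *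
        (pD e2 (uncur ρ) p + Wf U p * uncur ρ p + Vf U γ p * pD e1 (uncur ρ) p) = 0 := by
      intro p
      have k1 := key 1 one_ne_zero p
      have km := key (-1) (by norm_num) p
      have k2 := key 2 two_ne_zero p
      linear_combination (1/4) * k1 - (1/12) * km - (1/6) * k2
    have hc : Continuous (fun p => pD e2 (uncur ρ) p + Wf U p * uncur ρ p
        + Vf U γ p * pD e1 (uncur ρ) p) :=
      (((pD_contDiff hρ' e2).add ((Wf_contDiff hU').mul hρ')).add
        ((Vf_contDiff hU' γ).mul (pD_contDiff hρ' e1))).continuous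
    have hphi : ∀ p : ℝ × ℝ × ℝ,
        pD e2 (uncur ρ) p + Wf U p * uncur ρ p + Vf U γ p * pD e1 (uncur ρ) p = 0 := by
      intro p
      by_cases hp : p ∈ closure {q : ℝ × ℝ × ℝ | uncur ρ q ≠ 0}
      · exact closure_minimal
          (fun q hq => (mul_eq_zero.mp (hmul q)).resolve_left hq)
          (isClosed_eq hc continuous_const) hp
      · have hev : uncur ρ =ᶠ[nhds p] fun _ => (0:ℝ) := by
          have hmem : (closure {q : ℝ × ℝ × ℝ | uncur ρ q ≠ 0})ᶜ ∈ nhds p :=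
            isClosed_closure.isOpen_compl.mem_nhds hp
          filter_upwards [hmem] with q hq
          by_contra h
          exact hq (subset_closure h)
        have h0 : uncur ρ p = 0 := hev.eq_of_nhds
        have hf : fderiv ℝ (uncur ρ) p = fderiv ℝ (fun _ => (0:ℝ)) p := hev.fderiv_eq
        have hd1 : pD e1 (uncur ρ) p = 0 := by
          show fderiv ℝ (uncur ρ) p e1 = 0; rw [hf]; simp
        have hd2 : pD e2 (uncur ρ) p = 0 := by
          show fderiv ℝ (uncur ρ) p e2 = 0; rw [hf]; simp
        rw [h0, hd1, hd2]; ring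
    intro x t y
    have hg : uncur (fun x' t' y' => (pdY U x' t' y' + γ) * ρ x' t' y')
        = fun p => Vf U γ p * uncur ρ p := by
      funext p
      show (pdY U p.1 p.2.1 p.2.2 + γ) * ρ p.1 p.2.1 p.2.2 = _
      rw [pdY_eq hU']
      rfl
    have hgc : ContDiff ℝ (⊤ : ℕ∞) (uncur (fun x' t' y' => (pdY U x' t' y' + γ) * ρ x' t' y')) := by
      rw [hg]; exact (Vf_contDiff hU' γ).mul hρ'
    rw [pdT_eq hρ', pdX_eq hgc, hg,
      pD_mul ((Vf_contDiff hU' γ).differentiable (by simp) (x, t, y))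
        (hρ'.differentiable (by simp) (x, t, y)),
      pD_Vf]
    linear_combination hphi (x, t, y)
end
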